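/- Let L > 0 and let u = (f, g) ∈ H¹(T_L) be such that f is constant on the circle, f ≡ c > 0. Then Q(u) ≤ 1; equivalently, c⁶L ≤ (c²L + ∫₀^∞ g²)² · ∫₀^∞ (g′)², regardless of the specific form of g on the half-line. -/

import Mathlib

/-! On the circle, `f ≡ c` contributes `c⁶L` to the numerator, `c²L` to the mass and nothing to
the kinetic energy, so everything rests on the trace inequality `g(0)² ≤ 2‖g‖₂‖g'‖₂` on the
half-line. It comes from `g(0)² = g(T)² - 2∫₀^T g g'`: since `g²` is integrable, `g(T)` is
arbitrarily small for suitable `T`, and Cauchy–Schwarz bounds the integral. With `M = ‖g‖₂²`,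
`K = ‖g'‖₂²` this gives `c⁶L ≤ 4c²L·MK ≤ (c²L + M)²K` by AM–GM. -/

open MeasureTheory Real Set

noncomputable section

/-- `f ∈ H¹(0,L)` with weak derivative `f'`. -/
def IsH1Interval (L : ℝ) (f f' : ℝ → ℝ) : Prop :=
  (∀ x ∈ Icc (0:ℝ) L, f x = f 0 + ∫ t in (0:ℝ)..x, f' t) ∧
  IntervalIntegrable f' volume 0 L ∧
  IntervalIntegrable (fun x => f' x ^ 2) volume 0 L

/-- `g ∈ H¹(0,∞)` with weak derivative `g'`. -/
def IsH1Half (g g' : ℝ → ℝ) : Prop :=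
  (∀ x : ℝ, 0 ≤ x → g x = g 0 + ∫ t in (0:ℝ)..x, g' t) ∧
  MemLp g 2 (volume.restrict (Ioi 0)) ∧ MemLp g' 2 (volume.restrict (Ioi 0))

/-- `u = (f,g) ∈ H¹(T_L)`: an `H¹` function on the tadpole graph `T_L`, given
by `f ∈ H¹(0,L)` on the circle of length `L` and `g ∈ H¹(0,∞)` on the
half-line, glued by the continuity condition `f(0) = f(L) = g(0)`. -/
def TadpoleH1 (L : ℝ) (f f' g g' : ℝ → ℝ) : Prop :=
  IsH1Interval L f f' ∧ IsH1Half g g' ∧ f 0 = f L ∧ f L = g 0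

/-- The squared `L²` norm `‖u‖₂²` on the tadpole graph. -/
def tadMass (L : ℝ) (f g : ℝ → ℝ) : ℝ :=
  (∫ x in (0:ℝ)..L, f x ^ 2) + ∫ x in Ioi (0:ℝ), g x ^ 2

/-- The squared `L²` norm of the derivative `‖u'‖₂²` on the tadpole graph. -/
def tadKin (L : ℝ) (f' g' : ℝ → ℝ) : ℝ :=
  (∫ x in (0:ℝ)..L, f' x ^ 2) + ∫ x in Ioi (0:ℝ), g' x ^ 2

/-- The `L⁶` norm (to the sixth power) on the compact core `K` (the circle). -/
def tadSix (L : ℝ) (f : ℝ → ℝ) : ℝ :=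
  ∫ x in (0:ℝ)..L, f x ^ 6

/-- The reduced Gagliardo–Nirenberg quotient `Q(u) = ‖u‖_{6,K}⁶/(‖u‖₂⁴‖u'‖₂²)`. -/
def tadQ (L : ℝ) (f f' g g' : ℝ → ℝ) : ℝ :=
  tadSix L f / (tadMass L f g ^ 2 * tadKin L f' g')

/-- `u ≢ 0` on the tadpole graph. -/
def tadNonzero (L : ℝ) (f g : ℝ → ℝ) : Prop :=
  (∃ x ∈ Icc (0:ℝ) L, f x ≠ 0) ∨ (∃ x : ℝ, 0 ≤ x ∧ g x ≠ 0)

/-- The sharp constant `C_K(T_L)` of the reduced Gagliardo–Nirenberg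
inequality on the tadpole graph. -/
def tadCK (L : ℝ) : ℝ :=
  sSup {q : ℝ | ∃ f f' g g' : ℝ → ℝ,
    TadpoleH1 L f f' g g' ∧ tadNonzero L f g ∧ q = tadQ L f f' g g'}

theorem sq_sub_sq_eq_two_mul_integral_mul {g g' : ℝ → ℝ} {a b : ℝ} (hab : a ≤ b)
    (hg' : IntervalIntegrable g' volume a b)
    (hg : ∀ x ∈ Icc a b, g x = g a + ∫ t in a..x, g' t) :
    g b ^ 2 - g a ^ 2 = 2 * ∫ x in a..b, g x * g' x := by
  set G : ℝ → ℝ := fun x => g a + ∫ t in a..x, g' t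
  have hG : AbsolutelyContinuousOnInterval G a b :=
    (LipschitzWith.const (g a)).lipschitzOnWith.absolutelyContinuousOnInterval.add
      (hg'.absolutelyContinuousOnInterval_intervalIntegral left_mem_uIcc)
  have hGb : G b = g b := (hg b (right_mem_Icc.2 hab)).symm
  have hGa : G a = g a := by simp [G]
  have hderiv : ∫ x in a..b, deriv G x * G x + G x * deriv G x
      = ∫ x in a..b, 2 * (g x * g' x) := by
    refine intervalIntegral.integral_congr_ae ?_
    filter_upwards [hg'.ae_hasDerivAt_integral] with x hx hxab
    have hx' : x ∈ uIcc a b := uIoc_subset_uIcc hxab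
    have hGx : G x = g x := (hg x (uIcc_of_le hab ▸ hx')).symm
    rw [((hx hx' a left_mem_uIcc).const_add (g a)).deriv, hGx]
    ring
  rw [← intervalIntegral.integral_const_mul, ← hderiv, hG.integral_deriv_mul_eq_sub hG, hGa, hGb]
  ring

theorem exists_gt_norm_lt_of_integrableOn_Ioi {E : Type*} [NormedAddCommGroup E] {f : ℝ → E}
    {a δ : ℝ} (hf : IntegrableOn f (Ioi a)) (hδ : 0 < δ) : ∃ x > a, ‖f x‖ < δ := by
  by_contra! h
  have hconst : IntegrableOn (fun _ => δ) (Ioi a) :=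
    hf.norm.mono' aestronglyMeasurable_const <| (ae_restrict_mem measurableSet_Ioi).mono
      fun x hx => by simpa [abs_of_pos hδ] using h x hx
  rw [integrableOn_const_iff] at hconst
  simp [hδ.ne'] at hconst

theorem integral_norm_mul_le_sqrt_mul_sqrt {α : Type*} [MeasurableSpace α] {μ : Measure α}
    {f g : α → ℝ} (hf : MemLp f 2 μ) (hg : MemLp g 2 μ) :
    ∫ x, ‖f x‖ * ‖g x‖ ∂μ ≤ √(∫ x, f x ^ 2 ∂μ) * √(∫ x, g x ^ 2 ∂μ) := by
  have h := integral_mul_norm_le_Lp_mul_Lq Real.HolderConjugate.two_two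
    (by simpa using hf) (by simpa using hg)
  simpa [Real.sqrt_eq_rpow, Real.norm_eq_abs] using h

theorem IsH1Half.sq_apply_zero_le {g g' : ℝ → ℝ} (h : IsH1Half g g') :
    g 0 ^ 2 ≤ 2 * √(∫ x in Ioi (0:ℝ), g x ^ 2) * √(∫ x in Ioi (0:ℝ), g' x ^ 2) := by
  obtain ⟨hrep, hg, hg'⟩ := h
  refine le_of_forall_pos_le_add fun δ hδ => ?_
  obtain ⟨T, hT, hgT⟩ := exists_gt_norm_lt_of_integrableOn_Ioi hg.integrable_sq hδ
  have hg'T : IntervalIntegrable g' volume 0 T := by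
    rw [intervalIntegrable_iff_integrableOn_Ioc_of_le hT.le]
    exact (hg'.mono_measure (Measure.restrict_mono Ioc_subset_Ioi_self le_rfl)).integrable
      one_le_two
  have hsq := sq_sub_sq_eq_two_mul_integral_mul hT.le hg'T fun x hx => hrep x hx.1
  have hbound : |∫ x in (0:ℝ)..T, g x * g' x| ≤ ∫ x in Ioi (0:ℝ), ‖g x‖ * ‖g' x‖ :=
    calc |∫ x in (0:ℝ)..T, g x * g' x|
        ≤ ∫ x in Ioc (0:ℝ) T, ‖g x‖ * ‖g' x‖ := by
          rw [intervalIntegral.integral_of_le hT.le, ← Real.norm_eq_abs]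
          simpa only [norm_mul] using norm_integral_le_integral_norm fun x => g x * g' x
      _ ≤ ∫ x in Ioi (0:ℝ), ‖g x‖ * ‖g' x‖ := by
          refine setIntegral_mono_set ?_ (.of_forall fun x => by positivity)
            Ioc_subset_Ioi_self.eventuallyLE
          simpa only [IntegrableOn, Pi.mul_apply, norm_mul] using (hg.integrable_mul hg').norm
  have hCS := integral_norm_mul_le_sqrt_mul_sqrt hg hg'
  rw [Real.norm_eq_abs, abs_of_nonneg (sq_nonneg _)] at hgT
  linarith [neg_abs_le (∫ x in (0:ℝ)..T, g x * g' x)]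

theorem constant_on_core_quotient_le_one_general (L c : ℝ) (hL : 0 < L)
    (g g' : ℝ → ℝ) (h : TadpoleH1 L (fun _ => c) (fun _ => 0) g g') :
    tadQ L (fun _ => c) (fun _ => 0) g g' ≤ 1 ∧
    c ^ 6 * L ≤ (c ^ 2 * L + ∫ x in Ioi (0:ℝ), g x ^ 2) ^ 2 *
      ∫ x in Ioi (0:ℝ), g' x ^ 2 := by
  obtain ⟨-, hg, -, hcg⟩ := h
  have hQ : tadQ L (fun _ => c) (fun _ => 0) g g' = c ^ 6 * L /
      ((c ^ 2 * L + ∫ x in Ioi (0:ℝ), g x ^ 2) ^ 2 * ∫ x in Ioi (0:ℝ), g' x ^ 2) := by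
    simp only [tadQ, tadSix, tadMass, tadKin, intervalIntegral.integral_const, smul_eq_mul]
    ring
  set M := ∫ x in Ioi (0:ℝ), g x ^ 2
  set K := ∫ x in Ioi (0:ℝ), g' x ^ 2
  have hM : 0 ≤ M := setIntegral_nonneg measurableSet_Ioi fun _ _ => sq_nonneg _
  have hK : 0 ≤ K := setIntegral_nonneg measurableSet_Ioi fun _ _ => sq_nonneg _
  have htrace : c ^ 2 ≤ 2 * √M * √K := by simpa only [← hcg] using hg.sq_apply_zero_le
  have hmain : c ^ 6 * L ≤ (c ^ 2 * L + M) ^ 2 * K :=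
    calc c ^ 6 * L = c ^ 2 * L * (c ^ 2) ^ 2 := by ring
      _ ≤ c ^ 2 * L * (2 * √M * √K) ^ 2 := by gcongr
      _ = 4 * (c ^ 2 * L) * M * K := by rw [mul_pow, mul_pow, sq_sqrt hM, sq_sqrt hK]; ring
      _ ≤ (c ^ 2 * L + M) ^ 2 * K := by
          gcongr
          nlinarith [sq_nonneg (c ^ 2 * L - M)]
  refine ⟨?_, hmain⟩
  rw [hQ]
  exact div_le_one_of_le₀ hmain (by positivity)

/-- If `u = (f,g) ∈ H¹(T_L)` is constant, `f ≡ c > 0`, on the circle, then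
`Q(u) ≤ 1`; equivalently `c⁶L ≤ (c²L + ∫₀^∞ g²)² ∫₀^∞ (g')²`, regardless of
the specific form of `g` on the half-line. -/
theorem constant_on_core_quotient_le_one (L c : ℝ) (hL : 0 < L) (hc : 0 < c)
    (g g' : ℝ → ℝ) (h : TadpoleH1 L (fun _ => c) (fun _ => 0) g g') :
    tadQ L (fun _ => c) (fun _ => 0) g g' ≤ 1 ∧
    c ^ 6 * L ≤ (c ^ 2 * L + ∫ x in Ioi (0:ℝ), g x ^ 2) ^ 2 *
      ∫ x in Ioi (0:ℝ), g' x ^ 2 :=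
  constant_on_core_quotient_le_one_general L c hL g g' h
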